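/- arXiv:1012.5745 — 5 statements merged into one kernel-verified Lean document; each statement's English description precedes it below -/
import Mathlib

section
/- Let K = ℚ(√p₁, √p₂, ...) be the subfield of ℝ generated over ℚ by the square roots of an infinite strictly increasing sequence of primes p₁ < p₂ < ..., and for each i let fᵢ : K → K be the ℚ-automorphism sending √pᵢ to −√pᵢ and fixing √pⱼ for j ≠ i. Then for x ∈ K, fᵢ(x) = x for all i ∈ ℕ if and only if x ∈ ℚ. -/
/-!
Every element of `K` lies in the subfield generated by finitely many of the `√pⱼ`, and these can
be removed one at a time. If `a ^ 2` lies in a subfield `F₀`, then `F₀(a) = F₀ + F₀ a`; an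
element `u + v a` fixed by an automorphism that fixes `F₀` and negates `a` satisfies `2 v a = 0`,
so it equals `u ∈ F₀`. After all generators are removed, what remains is the prime field `ℚ`.
-/

open Set

namespace Subfield

variable {F : Type*} [Field F]

theorem closure_preimage_subtype_eq_top (s : Set F) :
    closure ((closure s).subtype ⁻¹' s) = ⊤ := by
  refine eq_top_iff.mpr fun y _ => ?_
  have hy : (y : F) ∈ (closure ((closure s).subtype ⁻¹' s)).map (closure s).subtype := by
    rw [RingHom.map_field_closure, coe_subtype, image_preimage_eq_inter_range, Subtype.range_coe,
      inter_eq_left.mpr Subfield.subset_closure]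
    exact y.2
  obtain ⟨z, hz, hzy⟩ := mem_map.mp hy
  rwa [← Subtype.ext hzy]

theorem exists_finset_of_mem_closure_range {ι : Type*} {g : ι → F} {x : F}
    (hx : x ∈ closure (range g)) : ∃ s : Finset ι, x ∈ closure (g '' s) := by
  have hrange : range g = ⋃ s : Finset ι, g '' s := by
    refine Subset.antisymm (range_subset_iff.mpr fun i => mem_iUnion.mpr ⟨{i}, by simp⟩) ?_
    exact iUnion_subset fun s => image_subset_range g s
  have hdir : Directed (· ≤ ·) fun s : Finset ι => closure (g '' s) :=
    Monotone.directed_le fun s t hst => closure_mono (image_mono hst)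
  rwa [hrange, closure_iUnion, mem_iSup_of_directed hdir] at hx

/-- The subfield `F₀ + F₀ a`, which is `F₀(a)` since `a ^ 2 ∈ F₀`. -/
def adjoinSqrt (F₀ : Subfield F) (a : F) (ha : a ^ 2 ∈ F₀) : Subfield F where
  carrier := {x | ∃ u ∈ F₀, ∃ v ∈ F₀, x = u + v * a}
  zero_mem' := ⟨0, zero_mem _, 0, zero_mem _, by ring⟩
  one_mem' := ⟨1, one_mem _, 0, zero_mem _, by ring⟩
  add_mem' := by
    rintro _ _ ⟨u, hu, v, hv, rfl⟩ ⟨u', hu', v', hv', rfl⟩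
    exact ⟨u + u', add_mem hu hu', v + v', add_mem hv hv', by ring⟩
  neg_mem' := by
    rintro _ ⟨u, hu, v, hv, rfl⟩
    exact ⟨-u, neg_mem hu, -v, neg_mem hv, by ring⟩
  mul_mem' := by
    rintro _ _ ⟨u, hu, v, hv, rfl⟩ ⟨u', hu', v', hv', rfl⟩
    exact ⟨u * u' + v * v' * a ^ 2, add_mem (mul_mem hu hu') (mul_mem (mul_mem hv hv') ha),
      u * v' + v * u', add_mem (mul_mem hu hv') (mul_mem hv hu'), by ring⟩
  inv_mem' := by
    rintro _ ⟨u, hu, v, hv, rfl⟩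
    by_cases haF : a ∈ F₀
    · exact ⟨(u + v * a)⁻¹, inv_mem (add_mem hu (mul_mem hv haF)), 0, zero_mem _, by ring⟩
    have hdF : u ^ 2 - v ^ 2 * a ^ 2 ∈ F₀ := sub_mem (pow_mem hu 2) (mul_mem (pow_mem hv 2) ha)
    refine ⟨u / (u ^ 2 - v ^ 2 * a ^ 2), div_mem hu hdF,
      -v / (u ^ 2 - v ^ 2 * a ^ 2), div_mem (neg_mem hv) hdF, ?_⟩
    have hnorm : u ^ 2 - v ^ 2 * a ^ 2 = (u + v * a) * (u - v * a) := by ring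
    by_cases hx0 : u + v * a = 0
    · simp [hnorm, hx0]
    have hconj : u - v * a ≠ 0 := by
      intro hconj
      have hv0 : v ≠ 0 := by
        rintro rfl
        exact hx0 (by linear_combination hconj)
      exact haF (by
        rw [show a = u / v by field_simp; linear_combination -hconj]
        exact div_mem hu hv)
    rw [hnorm]
    field_simp
    ring

theorem closure_insert_le_adjoinSqrt {S : Set F} {a : F} (ha : a ^ 2 ∈ closure S) :
    closure (insert a S) ≤ adjoinSqrt (closure S) a ha := by
  rw [closure_le]
  rintro y (rfl | hy)
  · exact ⟨0, zero_mem _, 1, one_mem _, by ring⟩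
  · exact ⟨y, subset_closure hy, 0, zero_mem _, by ring⟩

theorem mem_closure_of_mem_closure_insert_of_map_eq_self [NeZero (2 : F)] {S : Set F} {a : F}
    (ha : a ^ 2 ∈ closure S) {σ : F →+* F} (hσS : EqOn σ (RingHom.id F) S) (hσa : σ a = -a)
    {x : F} (hx : x ∈ closure (insert a S)) (hσx : σ x = x) : x ∈ closure S := by
  obtain ⟨u, hu, v, hv, rfl⟩ := closure_insert_le_adjoinSqrt ha hx
  rw [map_add, map_mul, RingHom.eqOn_field_closure hσS hu, RingHom.eqOn_field_closure hσS hv,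
    hσa] at hσx
  have hva : v * a = 0 :=
    (mul_eq_zero.mp (by linear_combination -hσx : (2 : F) * (v * a) = 0)).resolve_left two_ne_zero
  rwa [hva, add_zero]

section SignChanges

variable [NeZero (2 : F)] {ι : Type*} {g : ι → F} {σ : ι → F →+* F}

theorem mem_bot_of_mem_closure_image_of_forall_map_eq_self
    (hsq : ∀ i, g i ^ 2 ∈ (⊥ : Subfield F)) (hσ_self : ∀ i, σ i (g i) = -g i)
    (hσ_ne : ∀ i j, j ≠ i → σ i (g j) = g j) {x : F} (hfix : ∀ i, σ i x = x)
    (s : Finset ι) (hx : x ∈ closure (g '' s)) : x ∈ (⊥ : Subfield F) := by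
  classical
  induction s using Finset.induction_on with
  | empty => simpa using hx
  | insert a t ha ih =>
    rw [Finset.coe_insert, image_insert_eq] at hx
    have hsq_a : g a ^ 2 ∈ closure (g '' t) := bot_le (a := closure (g '' t)) (hsq a)
    refine ih (mem_closure_of_mem_closure_insert_of_map_eq_self hsq_a ?_ (hσ_self a) hx (hfix a))
    rintro _ ⟨j, hj, rfl⟩
    exact hσ_ne a j (ne_of_mem_of_not_mem hj ha)

theorem mem_bot_of_mem_closure_range_of_forall_map_eq_self
    (hsq : ∀ i, g i ^ 2 ∈ (⊥ : Subfield F)) (hσ_self : ∀ i, σ i (g i) = -g i)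
    (hσ_ne : ∀ i j, j ≠ i → σ i (g j) = g j) {x : F}
    (hx : x ∈ closure (range g)) (hfix : ∀ i, σ i x = x) : x ∈ (⊥ : Subfield F) :=
  let ⟨s, hs⟩ := exists_finset_of_mem_closure_range hx
  mem_bot_of_mem_closure_image_of_forall_map_eq_self hsq hσ_self hσ_ne hfix s hs

end SignChanges

end Subfield

theorem stmt0_general (p : ℕ → ℕ)
    (f : ℕ → (Subfield.closure (Set.range fun i => Real.sqrt (p i)) ≃+*
      Subfield.closure (Set.range fun i => Real.sqrt (p i))))
    (hf : ∀ i j, ((f i ⟨Real.sqrt (p j), Subfield.subset_closure (Set.mem_range_self j)⟩ :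
        Subfield.closure (Set.range fun i => Real.sqrt (p i))) : ℝ) =
      if j = i then -Real.sqrt (p i) else Real.sqrt (p j))
    (x : Subfield.closure (Set.range fun i => Real.sqrt (p i))) :
    (∀ i, f i x = x) ↔ ∃ q : ℚ, (x : ℝ) = q := by
  let K := Subfield.closure (range fun i => Real.sqrt (p i))
  let g : ℕ → K := fun j => ⟨Real.sqrt (p j), Subfield.subset_closure (mem_range_self j)⟩
  constructor
  · intro hfix
    have hx : x ∈ Subfield.closure (range g) := by
      have hg : range g = K.subtype ⁻¹' range fun i => Real.sqrt (p i) := by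
        ext y
        exact ⟨fun ⟨j, hj⟩ => ⟨j, congrArg Subtype.val hj⟩,
          fun ⟨j, hj⟩ => ⟨j, Subtype.ext hj⟩⟩
      rw [hg, Subfield.closure_preimage_subtype_eq_top]
      trivial
    have hsq (i : ℕ) : g i ^ 2 ∈ (⊥ : Subfield K) := by
      rw [show g i ^ 2 = (p i : K) from Subtype.ext (by simp [g])]
      exact natCast_mem _ _
    have hself (i : ℕ) : f i (g i) = -g i := Subtype.ext (by simpa using hf i i)
    have hne (i j : ℕ) (hji : j ≠ i) : f i (g j) = g j :=
      Subtype.ext ((hf i j).trans (if_neg hji))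
    have hbot := Subfield.mem_bot_of_mem_closure_range_of_forall_map_eq_self
      (σ := fun i => (f i : K →+* K)) hsq hself hne hx hfix
    obtain ⟨q, rfl⟩ := Subfield.bot_eq_of_charZero (K := K) ▸ hbot
    exact ⟨q, by simp⟩
  · rintro ⟨q, hq⟩ i
    rw [show x = q from Subtype.ext (by simpa using hq)]
    exact map_ratCast (f i) q

/-- For `K = ℚ(√p₁, √p₂, …)` with `p₁ < p₂ < ⋯` primes and `fᵢ` the ℚ-automorphism of `K`
negating `√pᵢ` and fixing the other `√pⱼ`, an element `x ∈ K` is fixed by all `fᵢ` iff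
`x ∈ ℚ`. -/
theorem stmt0 (p : ℕ → ℕ) (hp : ∀ i, Nat.Prime (p i)) (hmono : StrictMono p)
    (f : ℕ → (Subfield.closure (Set.range fun i => Real.sqrt (p i)) ≃+*
      Subfield.closure (Set.range fun i => Real.sqrt (p i))))
    (hf : ∀ i j, ((f i ⟨Real.sqrt (p j), Subfield.subset_closure (Set.mem_range_self j)⟩ :
        Subfield.closure (Set.range fun i => Real.sqrt (p i))) : ℝ) =
      if j = i then -Real.sqrt (p i) else Real.sqrt (p j))
    (x : Subfield.closure (Set.range fun i => Real.sqrt (p i))) :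
    (∀ i, f i x = x) ↔ ∃ q : ℚ, (x : ℝ) = q :=
  stmt0_general p f hf x
end

section
/- Let D be a division ring strongly algebraic over its center F, and T a finite subset of D. Then there exists a division subring of D containing F ∪ T which is centrally finite (finite-dimensional over its own center). -/
universe u

/-- A subring of a division ring that is closed under inverses, i.e. a division subring. -/
def IsDivisionSubring {D : Type u} [DivisionRing D] (E : Subring D) : Prop :=
  ∀ x ∈ E, x⁻¹ ∈ E

/-- The division subring of `D` generated by a set `S`. -/
def divClosure (D : Type u) [DivisionRing D] (S : Set D) : Subring D :=
  sInf {E : Subring D | S ⊆ E ∧ IsDivisionSubring E}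

/-- A maximal subfield of a division ring `D`: a commutative division subring containing the
center which is maximal among commutative division subrings. -/
def IsMaximalSubfield (D : Type u) [DivisionRing D] (K : Subring D) : Prop :=
  IsDivisionSubring K ∧ (∀ x ∈ K, ∀ y ∈ K, x * y = y * x) ∧ Subring.center D ≤ K ∧
    ∀ K' : Subring D, IsDivisionSubring K' → (∀ x ∈ K', ∀ y ∈ K', x * y = y * x) →
      K ≤ K' → K' = K

/-- A division ring is centrally finite if it is a finite-dimensional vector space over its
center. -/
def IsCentrallyFinite (D : Type u) [DivisionRing D] : Prop :=
  Module.Finite (Subring.center D) D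

/-- A division ring `D` is strongly algebraic over its center `F` if it is algebraic over `F`
and it has a maximal subfield `K = F(S)` such that every `x ∈ D` fails to commute with only
finitely many elements of `S`. -/
def IsStronglyAlgebraic (D : Type u) [DivisionRing D] : Prop :=
  (∀ a : D, IsAlgebraic (Subring.center D) a) ∧
  ∃ (K : Subring D) (S : Set D), IsMaximalSubfield D K ∧ S ⊆ K ∧
    K = divClosure D ((Subring.center D : Set D) ∪ S) ∧
    ∀ x : D, {y ∈ S | x * y ≠ y * x}.Finite

/-- An embedding of a ring into some centrally finite division ring. -/
structure CFEmbedding (R : Type u) [Ring R] : Type (u + 1) where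
  L : Type u
  [instL : DivisionRing L]
  f : R →+* L
  inj : Function.Injective f
  cf : IsCentrallyFinite L

/-- A division ring is locally linear if every finite subset is contained in a division
subring that embeds in some centrally finite division ring. -/
def IsLocallyLinear (D : Type u) [DivisionRing D] : Prop :=
  ∀ S : Finset D, ∃ E : Subring D, (S : Set D) ⊆ E ∧ IsDivisionSubring E ∧
    Nonempty (CFEmbedding E)

/-- A subgroup is subnormal if there is a finite chain of successively normal subgroups
reaching the whole group. -/
def IsSubnormal {G : Type u} [Group G] (N : Subgroup G) : Prop :=
  ∃ (n : ℕ) (c : ℕ → Subgroup G), c 0 = N ∧ c n = ⊤ ∧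
    ∀ i < n, c i ≤ c (i + 1) ∧ ∀ x ∈ c (i + 1), ∀ h ∈ c i, x * h * x⁻¹ ∈ c i

/-- A division subring `E` of `D` is centrally finite if `E` is spanned over its own center by
finitely many elements. -/
def IsCentrallyFiniteSubring {D : Type u} [DivisionRing D] (E : Subring D) : Prop :=
  ∃ B : Finset D, (B : Set D) ⊆ E ∧ ∀ x ∈ E, ∃ c : D → D,
    (∀ b ∈ B, c b ∈ E ∧ ∀ y ∈ E, c b * y = y * c b) ∧ x = ∑ b ∈ B, c b * b

/-!
Let `S₀ ⊆ S` be the finitely many elements of `S` that fail to commute with some element of `T`,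
and let `E` be the centralizer of `S \ S₀`. It is a division ring containing `F`, `T` and the
maximal subfield `K = F(S)`, and `S \ S₀` lies in its center `Z`. The elements of `S₀` commute and
are algebraic, so `Z[S₀]` is a finite-dimensional division algebra over `Z` containing `K`; by
maximality of `K` its centralizer in `E` lies in `K ⊆ Z[S₀]`.

For a subalgebra `K` of a division algebra `A` over a field `L`, finite over `L` and containing its
own centralizer, `A` is a simple module over `Aᵐᵒᵖ ⊗[L] K` whose endomorphisms are left
multiplications by `K`. Jacobson density makes evaluation at `n` left `K`-independent elements a
surjection of `Aᵐᵒᵖ`-modules from `Aᵐᵒᵖ ⊗[L] K`, which has rank `[K : L]`, onto `(Aᵐᵒᵖ)ⁿ`.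
So `A` is finite over `K`, hence over `L`.
-/

theorem LinearIndependent.exists_linearMap_apply_eq {K V W ι : Type*} [DivisionRing K]
    [AddCommGroup V] [Module K V] [AddCommGroup W] [Module K W] {v : ι → V}
    (hv : LinearIndependent K v) (t : ι → W) : ∃ φ : V →ₗ[K] W, ∀ i, φ (v i) = t i := by
  obtain ⟨φ, hφ⟩ := LinearMap.exists_extend (Finsupp.linearCombination K t ∘ₗ hv.repr)
  refine ⟨φ, fun i => ?_⟩
  have := LinearMap.congr_fun hφ ⟨v i, Submodule.subset_span ⟨i, rfl⟩⟩
  simp only [LinearMap.comp_apply, Submodule.subtype_apply] at this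
  rwa [hv.repr_eq_single i _ rfl, Finsupp.linearCombination_single, one_smul] at this

open scoped IsMulCommutative in
theorem Algebra.finite_adjoin_of_pairwise_commute {R A : Type*} [CommRing R] [Ring A]
    [Algebra R A] {s : Set A} (hs : s.Finite) (hcomm : ∀ x ∈ s, ∀ y ∈ s, x * y = y * x)
    (hint : ∀ x ∈ s, IsIntegral R x) : Module.Finite R (Algebra.adjoin R s) := by
  have := Algebra.isMulCommutative_adjoin R hcomm
  have hfin := Algebra.finite_adjoin_of_finite_of_isIntegral
    (R := R) (s := ((↑) : Algebra.adjoin R s → A) ⁻¹' s)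
    (hs.preimage Subtype.val_injective.injOn) fun x hx =>
      (isIntegral_algHom_iff (Algebra.adjoin R s).val Subtype.val_injective).mp (hint _ hx)
  rw [Algebra.adjoin_adjoin_coe_preimage] at hfin
  exact Module.Finite.equiv Subalgebra.topEquiv.toLinearEquiv

section OpTensor

open TensorProduct MulOpposite

attribute [local instance] TensorProduct.Algebra.module

variable {L A : Type*} [Field L] [DivisionRing A] [Algebra L A] {K : Subalgebra L A}

theorem opTensor_tmul_smul (a : Aᵐᵒᵖ) (k : K) (x : A) : (a ⊗ₜ[L] k) • x = k * x * a.unop :=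
  rfl

theorem opTensor_smul_assoc (a : Aᵐᵒᵖ) (r : Aᵐᵒᵖ ⊗[L] K) (x : A) : (a • r) • x = a • r • x := by
  induction r using TensorProduct.induction_on with
  | zero => rw [smul_zero]; exact (zero_smul (Aᵐᵒᵖ ⊗[L] K) x).trans (smul_zero a).symm
  | tmul b k => simp [opTensor_tmul_smul, TensorProduct.smul_tmul', mul_assoc]
  | add r r' hr hr' => simp [smul_add, add_smul, hr, hr']

variable (K) in
theorem isSimpleModule_opTensor : IsSimpleModule (Aᵐᵒᵖ ⊗[L] K) A :=
  isSimpleModule_iff_toSpanSingleton_surjective.mpr ⟨inferInstance, fun x hx y =>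
    ⟨op (x⁻¹ * y) ⊗ₜ 1, by simp [opTensor_tmul_smul, ← mul_assoc, mul_inv_cancel₀ hx]⟩⟩

theorem end_opTensor_apply (g : Module.End (Aᵐᵒᵖ ⊗[L] K) A) (x : A) : g x = g 1 * x := by
  simpa [opTensor_tmul_smul] using g.map_smul (op x ⊗ₜ[L] (1 : K)) 1

theorem end_opTensor_apply_one_mem_centralizer (g : Module.End (Aᵐᵒᵖ ⊗[L] K) A) :
    g 1 ∈ Subalgebra.centralizer L (K : Set A) := by
  intro k hk
  have := g.map_smul ((1 : Aᵐᵒᵖ) ⊗ₜ[L] (⟨k, hk⟩ : K)) 1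
  simp only [opTensor_tmul_smul] at this
  simpa [← end_opTensor_apply g] using this.symm

def LinearMap.toEndEndOpTensor (hK : Subalgebra.centralizer L (K : Set A) ≤ K)
    (φ : A →ₗ[K] A) : Module.End (Module.End (Aᵐᵒᵖ ⊗[L] K) A) A where
  toFun := φ
  map_add' := φ.map_add
  map_smul' g x := by
    simp only [Module.End.smul_def, RingHom.id_apply]
    rw [end_opTensor_apply g x, end_opTensor_apply g (φ x)]
    exact φ.map_smul ⟨g 1, hK (end_opTensor_apply_one_mem_centralizer g)⟩ x

theorem exists_opTensor_smul_eq (hK : Subalgebra.centralizer L (K : Set A) ≤ K)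
    (φ : A →ₗ[K] A) (s : Finset A) : ∃ r : Aᵐᵒᵖ ⊗[L] K, ∀ x ∈ s, r • x = φ x := by
  have := isSimpleModule_opTensor (L := L) K
  obtain ⟨r, hr⟩ := jacobson_density (φ.toEndEndOpTensor hK) s
  exact ⟨r, fun x hx => (hr x hx).symm⟩

def opTensorEval {ι : Type*} (v : ι → A) : Aᵐᵒᵖ ⊗[L] K →ₗ[Aᵐᵒᵖ] (ι → Aᵐᵒᵖ) where
  toFun r i := op (r • v i)
  map_add' r r' := by ext i; simp [add_smul]
  map_smul' a r := by ext i; simp [opTensor_smul_assoc]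

theorem card_le_finrank_opTensor (hK : Subalgebra.centralizer L (K : Set A) ≤ K)
    [Module.Finite L K] {ι : Type*} [Fintype ι] {v : ι → A} (hv : LinearIndependent K v) :
    Fintype.card ι ≤ Module.finrank Aᵐᵒᵖ (Aᵐᵒᵖ ⊗[L] K) := by
  let _ := divisionRingOfFiniteDimensional L K
  have hsurj : Function.Surjective (opTensorEval (L := L) (K := K) v) := by
    classical
    intro t
    obtain ⟨φ, hφ⟩ := hv.exists_linearMap_apply_eq (unop ∘ t)
    obtain ⟨r, hr⟩ := exists_opTensor_smul_eq hK φ (Finset.univ.image v)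
    refine ⟨r, funext fun i => ?_⟩
    change op (r • v i) = t i
    rw [hr _ (Finset.mem_image_of_mem v (Finset.mem_univ i)), hφ, Function.comp_apply, op_unop]
  simpa using LinearMap.finrank_le_finrank_of_surjective hsurj

theorem Module.Finite.of_centralizer_le [Module.Finite L K]
    (hK : Subalgebra.centralizer L (K : Set A) ≤ K) : Module.Finite L A := by
  let _ := divisionRingOfFiniteDimensional L K
  have : Module.Finite K A := by
    rw [← Module.rank_lt_aleph0_iff]
    refine (rank_le (n := Module.finrank Aᵐᵒᵖ (Aᵐᵒᵖ ⊗[L] K)) fun s hs => ?_).trans_lt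
      Cardinal.natCast_lt_aleph0
    simpa using card_le_finrank_opTensor hK hs
  exact Module.Finite.trans K A

end OpTensor

section DivisionSubring

variable {D : Type u} [DivisionRing D]

theorem subset_divClosure (S : Set D) : S ⊆ divClosure D S := fun _ hx =>
  Subring.mem_sInf.mpr fun _ hE => hE.1 hx

theorem divClosure_le {S : Set D} {E : Subring D} (hS : S ⊆ E) (hE : IsDivisionSubring E) :
    divClosure D S ≤ E :=
  sInf_le ⟨hS, hE⟩

theorem isDivisionSubring_divClosure (S : Set D) : IsDivisionSubring (divClosure D S) :=
  fun _ hx => Subring.mem_sInf.mpr fun E hE => hE.2 _ (Subring.mem_sInf.mp hx E hE)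

theorem isDivisionSubring_centralizer (s : Set D) : IsDivisionSubring (Subring.centralizer s) :=
  fun _ => Set.inv_mem_centralizer₀

theorem divClosure_mul_comm {S : Set D} (hS : ∀ x ∈ S, ∀ y ∈ S, x * y = y * x) :
    ∀ x ∈ divClosure D S, ∀ y ∈ divClosure D S, x * y = y * x := by
  have h₁ : divClosure D S ≤ Subring.centralizer S :=
    divClosure_le (fun x hx y hy => hS y hy x hx) (isDivisionSubring_centralizer S)
  have h₂ : divClosure D S ≤ Subring.centralizer (divClosure D S) :=
    divClosure_le (fun x hx y hy => (h₁ hy x hx).symm) (isDivisionSubring_centralizer _)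
  exact fun x hx y hy => h₂ hy x hx

theorem IsMaximalSubfield.mem_of_forall_mul_comm {K : Subring D} (hK : IsMaximalSubfield D K)
    {x : D} (hx : ∀ k ∈ K, x * k = k * x) : x ∈ K := by
  have hcomm : ∀ a ∈ (K : Set D) ∪ {x}, ∀ b ∈ (K : Set D) ∪ {x}, a * b = b * a := by
    rintro a (ha | rfl) b (hb | rfl)
    · exact hK.2.1 a ha b hb
    · exact (hx a ha).symm
    · exact hx b hb
    · rfl
  have hle : K ≤ divClosure D (K ∪ {x}) := fun k hk => subset_divClosure _ (Or.inl hk)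
  rw [← hK.2.2.2 _ (isDivisionSubring_divClosure _) (divClosure_mul_comm hcomm) hle]
  exact subset_divClosure _ (Or.inr rfl)

theorem IsMaximalSubfield.mem_of_forall_mul_comm_generators {K : Subring D} {S : Set D}
    (hK : IsMaximalSubfield D K) (hKS : K = divClosure D (Subring.center D ∪ S)) {x : D}
    (hx : ∀ y ∈ S, x * y = y * x) : x ∈ K := by
  have hle : K ≤ Subring.centralizer {x} := by
    refine hKS ▸ divClosure_le ?_ (isDivisionSubring_centralizer _)
    rintro y (hy | hy) g hg
    all_goals rw [Set.mem_singleton_iff.mp hg]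
    · exact Subring.mem_center_iff.mp hy x
    · exact hx y hy
  exact hK.mem_of_forall_mul_comm fun k hk => hle hk x rfl

def Subfield.centralizer (s : Set D) : Subfield D :=
  { Subring.centralizer s with inv_mem' := fun _ => Set.inv_mem_centralizer₀ }

theorem Subfield.isCentrallyFiniteSubring (E : Subfield D)
    [Module.Finite (Subring.center E) E] : IsCentrallyFiniteSubring E.toSubring := by
  classical
  obtain ⟨s, hs⟩ := Module.Finite.fg_top (R := Subring.center E) (M := E)
  refine ⟨s.image (↑), fun _ hb => ?_, fun x hx => ?_⟩
  · obtain ⟨b, -, rfl⟩ := Finset.mem_image.mp hb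
    exact b.2
  have hx' : (⟨x, hx⟩ : E) ∈ Submodule.span (Subring.center E) (s : Set E) := hs ▸ trivial
  obtain ⟨c, -, hc⟩ := Submodule.mem_span_finset.mp hx'
  refine ⟨fun d => if h : d ∈ E then c ⟨d, h⟩ else 0, ?_, ?_⟩
  · simp only [Finset.mem_image]
    rintro _ ⟨b, -, rfl⟩
    refine ⟨by simp, fun y hy => ?_⟩
    simpa using congrArg Subtype.val ((c b).2.comm ⟨y, hy⟩)
  · rw [Finset.sum_image (fun _ _ _ _ => Subtype.ext)]
    simpa [Subring.smul_def] using congrArg Subtype.val hc.symm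

theorem isIntegral_center_of_isAlgebraic {E : Subfield D}
    (hE : Subring.center D ≤ E.toSubring) {x : E}
    (hx : IsAlgebraic (Subring.center D) (x : D)) : IsIntegral (Subring.center E) x := by
  let ψ : Subring.center D →+* Subring.center E :=
    { toFun c := ⟨⟨c, hE c.2⟩, Subring.mem_center_iff.mpr fun g =>
        Subtype.ext (Subring.mem_center_iff.mp c.2 g)⟩
      map_one' := rfl
      map_mul' _ _ := rfl
      map_zero' := rfl
      map_add' _ _ := rfl }
  have hψ : Function.Injective ψ := fun a b h =>
    Subtype.ext (congrArg (fun c : Subring.center E => (c : D)) h)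
  obtain ⟨p, hp0, hp⟩ := hx
  refine IsAlgebraic.isIntegral ⟨p.map ψ, (Polynomial.map_ne_zero_iff hψ).mpr hp0,
    Subtype.val_injective ?_⟩
  change E.subtype (Polynomial.eval₂ _ x (p.map ψ)) = 0
  rw [Polynomial.eval₂_map, Polynomial.hom_eval₂]
  exact hp

theorem isDivisionSubring_map {E : Subfield D} {L : Type*} [Field L] [Algebra L E]
    (M : Subalgebra L E) [Algebra.IsIntegral L M] :
    IsDivisionSubring (M.toSubring.map E.subtype) := by
  rintro _ ⟨y, hy, rfl⟩
  exact ⟨y⁻¹, Algebra.IsIntegral.inv_mem hy, rfl⟩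

section StronglyAlgebraic

variable {K : Subring D} {S S₀ : Set D} {E : Subfield D}

theorem IsMaximalSubfield.coe_mem_of_mem_centralizer (hK : IsMaximalSubfield D K)
    (hKS : K = divClosure D (Subring.center D ∪ S)) (hKE : K ≤ E.toSubring)
    (hE : E.toSubring ≤ Subring.centralizer (S \ S₀)) {x : E}
    (hx : x ∈ (Subtype.val ⁻¹' S₀ : Set E).centralizer) : (x : D) ∈ K := by
  refine hK.mem_of_forall_mul_comm_generators hKS fun y hy => ?_
  by_cases hy₀ : y ∈ S₀
  · have hyE : y ∈ E := hKE (hKS ▸ subset_divClosure _ (Or.inr hy))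
    exact (congrArg Subtype.val (hx ⟨y, hyE⟩ hy₀)).symm
  · exact (hE x.2 y ⟨hy, hy₀⟩).symm

theorem mem_of_coe_mem (hKS : K = divClosure D (Subring.center D ∪ S)) (hKE : K ≤ E.toSubring)
    (hE : E.toSubring ≤ Subring.centralizer (S \ S₀)) (M : Subalgebra (Subring.center E) E)
    [Algebra.IsIntegral (Subring.center E) M] (hM : Subtype.val ⁻¹' S₀ ⊆ (M : Set E)) {x : E}
    (hx : (x : D) ∈ K) : x ∈ M := by
  subst hKS
  have hSE : (Subring.center D : Set D) ∪ S ⊆ E := (subset_divClosure _).trans hKE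
  have hcentral : ∀ y (hy : y ∈ E), (∀ g ∈ E, g * y = y * g) → y ∈ M.toSubring.map E.subtype :=
    fun y hy hyc => ⟨⟨y, hy⟩, M.algebraMap_mem ⟨⟨y, hy⟩, Subring.mem_center_iff.mpr fun g =>
      Subtype.ext (hyc g g.2)⟩, rfl⟩
  have hKM : divClosure D ((Subring.center D : Set D) ∪ S) ≤ M.toSubring.map E.subtype := by
    refine divClosure_le (fun y hy => ?_) (isDivisionSubring_map M)
    rcases hy with hy | hy
    · exact hcentral y (hSE (Or.inl hy)) fun g _ => Subring.mem_center_iff.mp hy g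
    · by_cases hy₀ : y ∈ S₀
      · exact ⟨⟨y, hSE (Or.inr hy)⟩, hM hy₀, rfl⟩
      · exact hcentral y (hSE (Or.inr hy)) fun g hg => (hE hg y ⟨hy, hy₀⟩).symm
  obtain ⟨y, hy, hyx⟩ := hKM hx
  rwa [← Subtype.ext hyx]

theorem IsMaximalSubfield.finite_center (hK : IsMaximalSubfield D K)
    (hKS : K = divClosure D (Subring.center D ∪ S)) (hKE : K ≤ E.toSubring)
    (hE : E.toSubring ≤ Subring.centralizer (S \ S₀)) (hS₀S : S₀ ⊆ S) (hS₀ : S₀.Finite)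
    (halg : ∀ a : D, IsAlgebraic (Subring.center D) a) :
    Module.Finite (Subring.center E) E := by
  have hS₀K : S₀ ⊆ K := by
    rw [hKS]
    exact fun y hy => subset_divClosure _ (Or.inr (hS₀S hy))
  have := Algebra.finite_adjoin_of_pairwise_commute (R := Subring.center E)
    (hS₀.preimage Subtype.val_injective.injOn)
    (fun x hx y hy => Subtype.ext (hK.2.1 _ (hS₀K hx) _ (hS₀K hy)))
    (fun x _ => isIntegral_center_of_isAlgebraic (hK.2.2.1.trans hKE) (halg x))
  exact Module.Finite.of_centralizer_le fun x hx => mem_of_coe_mem hKS hKE hE _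
    Algebra.subset_adjoin
    (hK.coe_mem_of_mem_centralizer hKS hKE hE fun y hy => hx y (Algebra.subset_adjoin hy))

end StronglyAlgebraic

end DivisionSubring

/-- If `D` is strongly algebraic over its center `F` and `T ⊆ D` is finite, then there is a
division subring of `D` containing `F ∪ T` which is centrally finite. -/
theorem stmt7 (D : Type u) [DivisionRing D] (h : IsStronglyAlgebraic D) (T : Finset D) :
    ∃ E : Subring D, IsDivisionSubring E ∧ Subring.center D ≤ E ∧ (T : Set D) ⊆ E ∧
      IsCentrallyFiniteSubring E := by
  obtain ⟨halg, K, S, hK, hSK, hKS, hfin⟩ := h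
  set S₀ := ⋃ t ∈ (T : Set D), {y ∈ S | t * y ≠ y * t}
  have hS₀S : S₀ ⊆ S := Set.iUnion₂_subset fun _ _ => Set.sep_subset _ _
  have hKE : K ≤ (Subfield.centralizer (S \ S₀)).toSubring :=
    fun _ hk _ hy => hK.2.1 _ (hSK hy.1) _ hk
  have hTE : (T : Set D) ⊆ Subfield.centralizer (S \ S₀) := fun t ht y hy => by
    by_contra hne
    exact hy.2 (Set.mem_biUnion ht ⟨hy.1, fun h => hne h.symm⟩)
  have := hK.finite_center hKS hKE le_rfl hS₀S (T.finite_toSet.biUnion fun t _ => hfin t) halg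
  exact ⟨_, fun _ => Set.inv_mem_centralizer₀, hK.2.2.1.trans hKE, hTE,
    Subfield.isCentrallyFiniteSubring _⟩
end

section
/- If a division ring D is strongly algebraic over its center, then D is locally linear: every finite subset of D is contained in a division subring of D that embeds in some centrally finite division ring. -/
universe u

/-!
Given a finite `X ⊆ D`, let `S'` consist of the generators in `S` commuting with every element
of `X`; only finitely many elements of `S` lie outside `S'`. The centralizer `E` of `S'` is a
division subring containing `X` and `K`, in which `K` is still self-centralizing, i.e. a maximal
subfield. The center of `E` contains `S'` and the center of `D`, so `K` is generated over `Z(E)`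
by the finitely many algebraic elements of `S \ S'` and `[K : Z(E)]` is finite.

A division ring `E` with a maximal subfield `K` of finite degree over its center is centrally
finite. Indeed, the operators `x ↦ ∑ aⱼ x kⱼ` (`aⱼ ∈ E`, `kⱼ ∈ K`) form a left `E`-module spanned
by `[K : Z(E)]` elements, and by a Jacobson density argument (using that `K` is its own
centralizer) evaluation at any `m` elements of `E` independent over `K` acting on the right
maps this module onto `Eᵐ`. Hence `m ≤ [K : Z(E)]`, so `E` is finite-dimensional over `K`,
hence over `Z(E)`.
-/

section DivisionSubring

variable {D : Type u} [DivisionRing D]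

theorem divClosure_mono {A B : Set D} (h : A ⊆ B) : divClosure D A ≤ divClosure D B :=
  divClosure_le (h.trans (subset_divClosure B)) (isDivisionSubring_divClosure B)

theorem divClosure_image_le_map {E : Type u} [DivisionRing E] (f : E →+* D) (A : Set E) :
    divClosure D (f '' A) ≤ (divClosure E A).map f := by
  refine divClosure_le (Set.image_mono (subset_divClosure A)) ?_
  rintro _ ⟨y, hy, rfl⟩
  exact ⟨y⁻¹, isDivisionSubring_divClosure A y hy, map_inv₀ f y⟩

noncomputable abbrev IsDivisionSubring.toDivisionRing {E : Subring D}
    (hE : IsDivisionSubring E) : DivisionRing E :=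
  DivisionRing.ofIsUnitOrEqZero fun a => or_iff_not_imp_right.2 fun ha =>
    have ha' : (a : D) ≠ 0 := fun h => ha (Subtype.ext h)
    ⟨⟨a, ⟨_, hE a a.2⟩, Subtype.ext (mul_inv_cancel₀ ha'), Subtype.ext (inv_mul_cancel₀ ha')⟩,
      rfl⟩

theorem IsMaximalSubfield.centralizer_eq {K : Subring D} (hK : IsMaximalSubfield D K) :
    Subring.centralizer (K : Set D) = K := by
  obtain ⟨-, hcomm, -, hmax⟩ := hK
  refine le_antisymm (fun x hx => ?_) fun y hy =>
    Subring.mem_centralizer_iff.2 fun g hg => hcomm g hg y hy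
  -- the double centralizer of `K ∪ {x}` is a commutative division subring containing `K` and `x`
  let A : Set D := K ∪ {x}
  have hA : ∀ a ∈ A, ∀ b ∈ A, a * b = b * a := by
    rintro a (ha | rfl) b (hb | rfl)
    exacts [hcomm a ha b hb, Subring.mem_centralizer_iff.1 hx a ha,
      (Subring.mem_centralizer_iff.1 hx b hb).symm, rfl]
  have hA' : A ⊆ Subring.centralizer (Subring.centralizer A : Set D) :=
    Set.subset_centralizer_centralizer
  have := hmax _ (isDivisionSubring_centralizer _) (Set.centralizer_centralizer_comm_of_comm hA)
    fun y hy => hA' (Or.inl hy)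
  exact this ▸ hA' (Or.inr rfl)

theorem isField_of_centralizer_eq {K : Subring D} (hK : Subring.centralizer (K : Set D) = K) :
    IsField K where
  exists_pair_ne := exists_pair_ne K
  mul_comm a b := Subtype.ext <| Subring.mem_centralizer_iff.1 (hK.ge b.2) a a.2
  mul_inv_cancel {a} ha := ⟨⟨a⁻¹, (hK ▸ isDivisionSubring_centralizer _) a a.2⟩,
    Subtype.ext (mul_inv_cancel₀ fun h => ha (Subtype.ext h))⟩

theorem centralizer_comap_subtype_eq {K E : Subring D} (hKE : K ≤ E)
    (hK : Subring.centralizer (K : Set D) = K) :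
    Subring.centralizer (K.comap E.subtype : Set E) = K.comap E.subtype := by
  refine le_antisymm (fun x hx => ?_) fun x hx => Subring.mem_centralizer_iff.2 fun g hg =>
    Subtype.ext (Subring.mem_centralizer_iff.1 (hK.ge hx) g hg)
  refine (hK.le (Subring.mem_centralizer_iff.2 fun g hg => ?_) : (x : D) ∈ K)
  exact congrArg Subtype.val (Subring.mem_centralizer_iff.1 hx ⟨g, hKE hg⟩ hg)

theorem isAlgebraic_center_of_center_le {E : Subring D} (hE : Subring.center D ≤ E) {x : E}
    (hx : IsAlgebraic (Subring.center D) (x : D)) : IsAlgebraic (Subring.center E) x := by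
  let φ : Subring.center D →+* Subring.center E :=
    { toFun := fun z => ⟨⟨z, hE z.2⟩, Subring.mem_center_iff.2 fun g =>
        Subtype.ext (Subring.mem_center_iff.1 z.2 g)⟩
      map_one' := rfl
      map_mul' := fun _ _ => rfl
      map_zero' := rfl
      map_add' := fun _ _ => rfl }
  obtain ⟨p, hp, hpx⟩ := hx
  refine ⟨p.map φ, (Polynomial.map_ne_zero_iff fun a b h => ?_).2 hp, Subtype.val_injective ?_⟩
  · exact Subtype.ext (congrArg (fun z : Subring.center E => ((z : E) : D)) h)
  · rw [Polynomial.aeval_def, Polynomial.eval₂_map, ← Subring.coe_subtype, Polynomial.hom_eval₂]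
    exact hpx

end DivisionSubring

section RightLinearIndependent

variable {E : Type*} [DivisionRing E]

def RightLinearIndependent (K : Subring E) {m : ℕ} (v : Fin m → E) : Prop :=
  ∀ u : Fin m → E, (∀ i, u i ∈ K) → ∑ i, v i * u i = 0 → u = 0

variable {K : Subring E} {m : ℕ}

theorem RightLinearIndependent.init {v : Fin (m + 1) → E} (hv : RightLinearIndependent K v) :
    RightLinearIndependent K (Fin.init v) := by
  intro u hu hsum
  have := hv (Fin.snoc u 0) (Fin.lastCases (by simp [K.zero_mem]) (by simpa using hu))
    (by simpa [Fin.sum_univ_castSucc, Fin.init] using hsum)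
  funext i
  simpa using congrFun this i.castSucc

theorem RightLinearIndependent.last_ne_sum {v : Fin (m + 1) → E}
    (hv : RightLinearIndependent K v) {u : Fin m → E} (hu : ∀ i, u i ∈ K) :
    v (Fin.last m) ≠ ∑ i, v i.castSucc * u i := by
  intro h
  have := hv (Fin.snoc u (-1)) (Fin.lastCases (by simp [K.one_mem]) (by simpa using hu))
    (by simp [Fin.sum_univ_castSucc, ← h])
  simpa using congrFun this (Fin.last m)

end RightLinearIndependent

namespace Submodule

variable {E : Type*} [DivisionRing E] {m : ℕ}

open LinearMap

theorem eq_top_of_map_init_eq_top {W : Submodule E (Fin (m + 1) → E)}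
    (hW : W.map (funLeft E E Fin.castSucc) = ⊤) {w : Fin (m + 1) → E} (hwW : w ∈ W)
    (hw : Fin.init w = 0) (hlast : w (Fin.last m) ≠ 0) : W = ⊤ := by
  refine eq_top_iff.2 fun f _ => ?_
  obtain ⟨w', hw'W, hw'f⟩ : funLeft E E Fin.castSucc f ∈ W.map (funLeft E E Fin.castSucc) :=
    hW ▸ trivial
  have hf : f = w' + ((f (Fin.last m) - w' (Fin.last m)) * (w (Fin.last m))⁻¹) • w := by
    funext i
    refine Fin.lastCases ?_ (fun j => ?_) i
    · simp [inv_mul_cancel_right₀ hlast]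
    · have h1 := congrFun hw'f j
      have h2 := congrFun hw j
      simp only [funLeft_apply, Fin.init] at h1 h2
      simp [h1, h2]
  rw [hf]
  exact W.add_mem hw'W (W.smul_mem _ hwW)

theorem exists_last_eq_sum_of_map_init_eq_top {W : Submodule E (Fin (m + 1) → E)}
    (hW : W.map (funLeft E E Fin.castSucc) = ⊤)
    (h0 : ∀ w ∈ W, Fin.init w = 0 → w (Fin.last m) = 0) :
    ∃ b : Fin m → Fin (m + 1) → E, (∀ i, b i ∈ W) ∧ (∀ i, Fin.init (b i) = Pi.single i 1) ∧
      ∀ w ∈ W, w (Fin.last m) = ∑ i, w i.castSucc * b i (Fin.last m) := by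
  have hsurj : ∀ f : Fin m → E, ∃ w ∈ W, Fin.init w = f := fun f =>
    (hW.symm ▸ trivial : f ∈ W.map (funLeft E E Fin.castSucc))
  choose b hbW hb using fun i => hsurj (Pi.single i 1)
  refine ⟨b, hbW, hb, fun w hwW => ?_⟩
  have hinit : Fin.init (w - ∑ i, w i.castSucc • b i) = 0 := by
    have : Fin.init (w - ∑ i, w i.castSucc • b i) =
        Fin.init w - ∑ i, w i.castSucc • Fin.init (b i) := by
      funext j
      simp [Fin.init]
    rw [this]
    simp_rw [hb]
    exact sub_eq_zero.2 (pi_eq_sum_univ' (Fin.init w))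
  have := h0 _ (W.sub_mem hwW (W.sum_mem fun i _ => W.smul_mem _ (hbW i))) hinit
  simpa [sub_eq_zero] using this

theorem eq_top_of_mul_right_mem {K : Subring E} (hK : Subring.centralizer (K : Set E) ≤ K)
    {W : Submodule E (Fin m → E)} (hWK : ∀ w ∈ W, ∀ k ∈ K, (fun i => w i * k) ∈ W)
    {v : Fin m → E} (hvW : v ∈ W) (hv : RightLinearIndependent K v) : W = ⊤ := by
  induction m with
  | zero => exact Subsingleton.elim _ _
  | succ m ih =>
    have hW : W.map (funLeft E E Fin.castSucc) = ⊤ := by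
      refine ih ?_ ⟨v, hvW, rfl⟩ hv.init
      rintro _ ⟨w, hwW, rfl⟩ k hk
      exact ⟨_, hWK w hwW k hk, rfl⟩
    by_cases h0 : ∀ w ∈ W, Fin.init w = 0 → w (Fin.last m) = 0
    · obtain ⟨b, hbW, hb, hlast⟩ := exists_last_eq_sum_of_map_init_eq_top hW h0
      -- comparing the last coordinate of `b i * k` with the formula shows it commutes with `k`
      have hu : ∀ i, b i (Fin.last m) ∈ K := fun i =>
        hK <| Subring.mem_centralizer_iff.2 fun k hk => by
          have hb' : ∀ j, b i j.castSucc = (Pi.single i 1 : Fin m → E) j :=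
            fun j => congrFun (hb i) j
          simpa [hb', Pi.single_apply] using (hlast _ (hWK _ (hbW i) k hk)).symm
      exact absurd (hlast v hvW) (hv.last_ne_sum hu)
    · push Not at h0
      obtain ⟨w, hwW, hw, hlast⟩ := h0
      exact eq_top_of_map_init_eq_top hW hwW hw hlast

end Submodule

section MulRightSpan

variable {E : Type*} [DivisionRing E] (K : Subring E)

def mulRightSpan : Submodule E (E → E) :=
  Submodule.span E (Set.range fun k : K => fun x : E => x * k)

variable {K}

theorem id_mem_mulRightSpan : (fun x : E => x) ∈ mulRightSpan K :=
  Submodule.subset_span ⟨1, funext fun x => mul_one x⟩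

theorem mul_right_mem_mulRightSpan {T : E → E} (hT : T ∈ mulRightSpan K) {k : E} (hk : k ∈ K) :
    (fun x => T x * k) ∈ mulRightSpan K := by
  induction hT using Submodule.span_induction with
  | mem T hT =>
    obtain ⟨k', rfl⟩ := hT
    exact Submodule.subset_span ⟨⟨k' * k, K.mul_mem k'.2 hk⟩, by simp [mul_assoc]⟩
  | zero =>
    convert (mulRightSpan K).zero_mem using 1
    exact funext fun x => zero_mul k
  | add T T' _ _ hT hT' =>
    convert (mulRightSpan K).add_mem hT hT' using 1
    exact funext fun x => add_mul _ _ _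
  | smul e T _ hT =>
    convert (mulRightSpan K).smul_mem e hT using 1
    exact funext fun x => mul_assoc _ _ _

theorem mulRightSpan_le_span {s : Set E}
    (hs : (K : Set E) ⊆ Submodule.span (Subring.center E) s) :
    mulRightSpan K ≤ Submodule.span E ((fun b x => x * b) '' s) := by
  let μ : E →ₗ[Subring.center E] E → E :=
    { toFun := fun b x => x * b
      map_add' := fun _ _ => funext fun _ => mul_add _ _ _
      map_smul' := fun _ _ => funext fun _ => mul_smul_comm _ _ _ }
  refine Submodule.span_le.2 ?_
  rintro _ ⟨k, rfl⟩
  exact Submodule.span_le_restrictScalars (Subring.center E) E _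
    (Submodule.apply_mem_span_image_of_mem_span μ (hs k.2))

open Module in
theorem RightLinearIndependent.card_le (hK : Subring.centralizer (K : Set E) ≤ K)
    {s : Finset E} (hs : (K : Set E) ⊆ Submodule.span (Subring.center E) (s : Set E)) {m : ℕ}
    {v : Fin m → E} (hv : RightLinearIndependent K v) : m ≤ s.card := by
  classical
  let ev : (E → E) →ₗ[E] Fin m → E := LinearMap.pi fun i => LinearMap.proj (v i)
  have htop : (mulRightSpan K).map ev = ⊤ := by
    refine Submodule.eq_top_of_mul_right_mem hK ?_ ⟨_, id_mem_mulRightSpan, rfl⟩ hv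
    rintro _ ⟨T, hT, rfl⟩ k hk
    exact ⟨_, mul_right_mem_mulRightSpan hT hk, rfl⟩
  set P := Submodule.span E ((s.image fun b x => x * b : Finset (E → E)) : Set (E → E))
  have hPtop : P.map ev = ⊤ :=
    top_le_iff.1 (htop ▸ Submodule.map_mono (by simpa [P] using mulRightSpan_le_span hs))
  calc m = finrank E (Fin m → E) := (finrank_fin_fun E).symm
    _ = finrank E (P.map ev) := by rw [hPtop, finrank_top]
    _ ≤ finrank E P := Submodule.finrank_map_le ev P
    _ ≤ (s.image _).card := finrank_span_finset_le_card _
    _ ≤ s.card := Finset.card_image_le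

end MulRightSpan

section CentrallyFinite

variable {E : Type u} [DivisionRing E] {K : Subring E}

theorem RightLinearIndependent.exists_eq_sum_of_not_snoc (hK : IsDivisionSubring K) {m : ℕ}
    {v : Fin m → E} (hv : RightLinearIndependent K v) {x : E}
    (hx : ¬ RightLinearIndependent K (Fin.snoc v x : Fin (m + 1) → E)) :
    ∃ u : Fin m → E, (∀ i, u i ∈ K) ∧ x = ∑ i, v i * u i := by
  simp only [RightLinearIndependent, not_forall] at hx
  obtain ⟨u, huK, hsum, hu⟩ := hx
  rw [Fin.sum_univ_castSucc] at hsum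
  simp only [Fin.snoc_castSucc, Fin.snoc_last] at hsum
  have hlast : u (Fin.last m) ≠ 0 := by
    intro h
    rw [h, mul_zero, add_zero] at hsum
    refine hu (funext fun i => Fin.lastCases h (fun j => ?_) i)
    exact congrFun (hv (Fin.init u) (fun j => huK _) hsum) j
  refine ⟨fun i => -(u i.castSucc * (u (Fin.last m))⁻¹),
    fun i => K.neg_mem (K.mul_mem (huK _) (hK _ (huK _))), ?_⟩
  simp only [mul_neg, Finset.sum_neg_distrib, ← mul_assoc, ← Finset.sum_mul,
    eq_neg_of_add_eq_zero_left hsum, neg_mul, neg_neg, mul_inv_cancel_right₀ hlast]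

theorem exists_right_span_of_forall_card_le (hK : IsDivisionSubring K) {N : ℕ}
    (hN : ∀ (m : ℕ) (v : Fin m → E), RightLinearIndependent K v → m ≤ N) :
    ∃ (m : ℕ) (v : Fin m → E), ∀ x, ∃ u : Fin m → E, (∀ i, u i ∈ K) ∧ x = ∑ i, v i * u i := by
  classical
  let P : ℕ → Prop := fun m => ∃ v : Fin m → E, RightLinearIndependent K v
  have hP0 : P 0 := ⟨Fin.elim0, fun _ _ _ => Subsingleton.elim _ _⟩
  obtain ⟨v, hv⟩ : P (Nat.findGreatest P N) := Nat.findGreatest_spec (Nat.zero_le N) hP0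
  refine ⟨_, v, fun x => hv.exists_eq_sum_of_not_snoc hK fun hvx => ?_⟩
  exact Nat.findGreatest_is_greatest (Nat.lt_succ_self _) (hN _ _ hvx) ⟨_, hvx⟩

theorem isCentrallyFinite_of_centralizer_eq (hK : Subring.centralizer (K : Set E) = K)
    {s : Finset E} (hs : (K : Set E) ⊆ Submodule.span (Subring.center E) (s : Set E)) :
    IsCentrallyFinite E := by
  classical
  have hKdiv : IsDivisionSubring K := hK ▸ isDivisionSubring_centralizer _
  obtain ⟨m, v, hv⟩ :=
    exists_right_span_of_forall_card_le hKdiv fun _ _ hv => hv.card_le hK.le hs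
  refine ⟨⟨Finset.image₂ (· * ·) (Finset.univ.image v) s, eq_top_iff.2 fun x _ => ?_⟩⟩
  obtain ⟨u, hu, rfl⟩ := hv x
  refine Submodule.sum_mem _ fun i _ => Submodule.span_mono ?_
    (Submodule.apply_mem_span_image_of_mem_span (LinearMap.mulLeft _ (v i)) (hs (hu i)))
  rintro _ ⟨b, hb, rfl⟩
  simpa using ⟨v i, ⟨i, rfl⟩, b, hb, rfl⟩

theorem exists_finset_subset_span_center (hK : Subring.centralizer (K : Set E) = K) {T : Set E}
    (hT : T.Finite) (hTK : T ⊆ K) (halg : ∀ t ∈ T, IsAlgebraic (Subring.center E) t)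
    (hgen : K ≤ divClosure E ((Subring.center E : Set E) ∪ T)) :
    ∃ s : Finset E, (K : Set E) ⊆ Submodule.span (Subring.center E) (s : Set E) := by
  classical
  have hZK : Subring.center E ≤ K := hK ▸ Subring.center_le_centralizer _
  let _ : Field K := (isField_of_centralizer_eq hK).toField
  let _ : Algebra (Subring.center E) K := (Subring.inclusion hZK).toAlgebra
  let ι : K →ₐ[Subring.center E] E := { K.subtype with commutes' := fun _ => rfl }
  let T' : Set K := Subtype.val ⁻¹' T
  have : Finite T' := (hT.preimage Subtype.val_injective.injOn).to_subtype
  have hT' : ∀ t ∈ T', IsIntegral (Subring.center E) t := fun t ht =>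
    ((isAlgebraic_algHom_iff ι Subtype.val_injective).1 (halg t ht)).isIntegral
  have hadjoin : IntermediateField.adjoin (Subring.center E) T' = ⊤ := by
    refine eq_top_iff.2 fun x _ => ?_
    let J : Subring E := (IntermediateField.adjoin (Subring.center E) T').toSubring.map K.subtype
    have hJ : IsDivisionSubring J := by
      rintro _ ⟨y, hy, rfl⟩
      exact ⟨y⁻¹, IntermediateField.inv_mem _ hy, map_inv₀ K.subtype y⟩
    have hgenJ : (Subring.center E : Set E) ∪ T ⊆ J := by
      rintro y (hy | hy)
      · exact ⟨⟨y, hZK hy⟩, IntermediateField.algebraMap_mem _ (⟨y, hy⟩ : Subring.center E), rfl⟩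
      · exact ⟨⟨y, hTK hy⟩, IntermediateField.subset_adjoin _ _ hy, rfl⟩
    obtain ⟨y, hy, hyx⟩ := (hgen.trans (divClosure_le hgenJ hJ)) x.2
    rwa [Subtype.val_injective hyx] at hy
  have := IntermediateField.finiteDimensional_adjoin hT'
  have : FiniteDimensional (Subring.center E) K := by
    rw [hadjoin] at this
    exact Module.Finite.equiv IntermediateField.topEquiv.toLinearEquiv
  obtain ⟨s, hs⟩ := Module.Finite.fg_top (R := Subring.center E) (M := K)
  refine ⟨s.image Subtype.val, fun x hx => ?_⟩
  have hxs : (⟨x, hx⟩ : K) ∈ Submodule.span (Subring.center E) (s : Set K) := hs ▸ trivial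
  have hι : ⇑ι = Subtype.val := rfl
  simpa [hι] using Submodule.apply_mem_span_image_of_mem_span ι.toLinearMap hxs

end CentrallyFinite

theorem nonempty_cfEmbedding_centralizer {D : Type u} [DivisionRing D]
    (halg : ∀ a : D, IsAlgebraic (Subring.center D) a) {K : Subring D} {S S' : Set D}
    (hK : IsMaximalSubfield D K) (hSK : S ⊆ K)
    (hKS : K = divClosure D ((Subring.center D : Set D) ∪ S)) (hS'S : S' ⊆ S)
    (hfin : (S \ S').Finite) : Nonempty (CFEmbedding (Subring.centralizer S')) := by
  set E := Subring.centralizer S'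
  let _ : DivisionRing E := (isDivisionSubring_centralizer S').toDivisionRing
  have hKc := hK.centralizer_eq
  have hKE : K ≤ E := fun y hy => Subring.mem_centralizer_iff.2 fun g hg =>
    Subring.mem_centralizer_iff.1 (hKc.ge hy) g (hSK (hS'S hg))
  have hKEc := centralizer_comap_subtype_eq hKE hKc
  have hZ : Subring.center D ≤ E := Subring.center_le_centralizer _
  have hcentral : ∀ z ∈ (Subring.center D : Set D) ∪ S',
      ∃ hz : z ∈ E, (⟨z, hz⟩ : E) ∈ Subring.center E := by
    rintro z (hz | hz)
    · exact ⟨hZ hz, Subring.mem_center_iff.2 fun g => Subtype.ext (Subring.mem_center_iff.1 hz g)⟩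
    · exact ⟨hKE (hSK (hS'S hz)), Subring.mem_center_iff.2 fun g =>
        Subtype.ext (Subring.mem_centralizer_iff.1 g.2 z hz).symm⟩
  let T : Set E := E.subtype ⁻¹' (S \ S')
  have hsub : (Subring.center D : Set D) ∪ S ⊆ E.subtype '' ((Subring.center E : Set E) ∪ T) := by
    intro z hz
    by_cases hzT : z ∈ S \ S'
    · exact ⟨⟨z, hKE (hSK hzT.1)⟩, Or.inr hzT, rfl⟩
    · obtain ⟨hzE, hzc⟩ := hcentral z <| hz.imp_right fun hzS => not_not.1 fun h => hzT ⟨hzS, h⟩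
      exact ⟨⟨z, hzE⟩, Or.inl hzc, rfl⟩
  have hgen : K.comap E.subtype ≤ divClosure E ((Subring.center E : Set E) ∪ T) := by
    intro x hx
    obtain ⟨y, hy, hyx⟩ := divClosure_image_le_map E.subtype _
      (divClosure_mono hsub (hKS ▸ hx : (x : D) ∈ divClosure D _))
    rwa [Subtype.val_injective hyx] at hy
  obtain ⟨s, hs⟩ := exists_finset_subset_span_center hKEc
    (hfin.preimage Subtype.val_injective.injOn) (fun t ht => hSK ht.1)
    (fun t _ => isAlgebraic_center_of_center_le hZ (halg t)) hgen
  exact ⟨⟨E, RingHom.id E, Function.injective_id, isCentrallyFinite_of_centralizer_eq hKEc hs⟩⟩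

/-- If a division ring `D` is strongly algebraic over its center, then `D` is locally
linear. -/
theorem stmt8 (D : Type u) [DivisionRing D] (h : IsStronglyAlgebraic D) :
    IsLocallyLinear D := by
  obtain ⟨halg, K, S, hK, hSK, hKS, hfin⟩ := h
  intro X
  let S' := {y ∈ S | ∀ x ∈ X, x * y = y * x}
  have hfin' : (S \ S').Finite := by
    refine (X.finite_toSet.biUnion fun x _ => hfin x).subset fun y hy => ?_
    simp only [S', Set.mem_sdiff, Set.mem_ofPred_eq, not_and, not_forall] at hy
    obtain ⟨x, hx, hxy⟩ := hy.2 hy.1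
    exact Set.mem_biUnion hx ⟨hy.1, hxy⟩
  refine ⟨Subring.centralizer S', fun x hx => Subring.mem_centralizer_iff.2 fun y hy =>
    (hy.2 x hx).symm, isDivisionSubring_centralizer S', ?_⟩
  exact nonempty_cfEmbedding_centralizer halg hK hSK hKS (fun y hy => hy.1) hfin'
end

section
/- Let D be a locally linear division ring with center F. Then the center of the derived group D' = [D*, D*] is a torsion group. -/
universe u

/-! An element `w` of the centre of `D'` commutes with every commutator `w u w⁻¹ u⁻¹`, hence with
all its conjugates, and a Hua-type argument then shows that `w` is central in `D`. Since `w` is a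
product of finitely many commutators, local linearity places all the elements involved in a
division subring `E` embedded in a centrally finite division ring `L`. The centralizer `C` of the
image of `w` in `L` contains the image of `E`, is finite-dimensional over its centre `Z`, and has
`w ∈ Z`; the norm `C → Z` kills commutators and sends `w` to `w ^ [C : Z]`, so `w ^ [C : Z] = 1`. -/

theorem map_mem_commutator {G G' : Type*} [Group G] [Group G'] (f : G →* G') {g : G}
    (hg : g ∈ commutator G) : f g ∈ commutator G' := by
  rw [commutator_def] at hg ⊢
  exact Subgroup.commutator_mono le_top le_top
    ((Subgroup.map_commutator ⊤ ⊤ f).le (Subgroup.mem_map_of_mem f hg))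

theorem commute_conj_of_forall_mem_commutator {G : Type*} [Group G] {z : G}
    (hz : ∀ c ∈ commutator G, Commute z c) (u : G) : Commute z (u * z * u⁻¹) := by
  have h := hz _ (Subgroup.commutator_mem_commutator (Subgroup.mem_top z) (Subgroup.mem_top u))
  have h' : Commute z (u * z * u⁻¹)⁻¹ := by
    simpa [commutatorElement_def, mul_assoc] using (Commute.refl z).inv_right.mul_right h
  simpa using h'.inv_right

theorem exists_finset_mem_commutator_closure {G : Type*} [Group G] {w : G}
    (hw : w ∈ commutator G) :
    ∃ T : Finset G, w ∈ ⁅Subgroup.closure (T : Set G), Subgroup.closure (T : Set G)⁆ := by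
  classical
  rw [commutator_eq_closure] at hw
  induction hw using Subgroup.closure_induction with
  | mem x hx =>
    obtain ⟨a, b, rfl⟩ := hx
    exact ⟨{a, b}, Subgroup.commutator_mem_commutator (Subgroup.subset_closure (by simp))
      (Subgroup.subset_closure (by simp))⟩
  | one => exact ⟨∅, one_mem _⟩
  | mul x y _ _ hx hy =>
    obtain ⟨T₁, h₁⟩ := hx
    obtain ⟨T₂, h₂⟩ := hy
    have mono : ∀ T ⊆ T₁ ∪ T₂, ⁅Subgroup.closure (T : Set G), Subgroup.closure (T : Set G)⁆ ≤
        ⁅Subgroup.closure ((T₁ ∪ T₂ : Finset G) : Set G),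
          Subgroup.closure ((T₁ ∪ T₂ : Finset G) : Set G)⁆ := fun T hT =>
      have h := Subgroup.closure_mono (Finset.coe_subset.mpr hT)
      Subgroup.commutator_mono h h
    exact ⟨T₁ ∪ T₂, mul_mem (mono T₁ Finset.subset_union_left h₁)
      (mono T₂ Finset.subset_union_right h₂)⟩
  | inv x _ hx =>
    obtain ⟨T, hT⟩ := hx
    exact ⟨T, inv_mem hT⟩

theorem Units.exists_finset_forall_mem_map_commutator {M : Type*} [Monoid M] {w : Mˣ}
    (hw : w ∈ commutator Mˣ) :
    ∃ T : Finset M, ∀ {S : Type*} [SetLike S M] [SubmonoidClass S M] (E : S),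
      (T : Set M) ⊆ E → w ∈ (commutator Eˣ).map (Units.map (SubmonoidClass.subtype E)) := by
  classical
  obtain ⟨T, hT⟩ := exists_finset_mem_commutator_closure hw
  refine ⟨T.image (↑) ∪ T.image (fun u : Mˣ => ((u⁻¹ : Mˣ) : M)), fun E hTE => ?_⟩
  have hT_range : (T : Set Mˣ) ⊆ (Units.map (SubmonoidClass.subtype E)).range := fun u hu =>
    ⟨⟨⟨u, hTE (Finset.mem_union_left _ (Finset.mem_image_of_mem _ hu))⟩,
      ⟨↑u⁻¹, hTE (Finset.mem_union_right _ (Finset.mem_image_of_mem _ hu))⟩, Subtype.ext u.mul_inv,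
      Subtype.ext u.inv_mul⟩, Units.ext rfl⟩
  rw [commutator_def, Subgroup.map_commutator, ← MonoidHom.range_eq_map]
  have hclosure := (Subgroup.closure_le _).mpr hT_range
  exact Subgroup.commutator_mono hclosure hclosure hT

theorem mem_center_of_forall_commute_conj {D : Type*} [DivisionRing D] {z : D}
    (hz : ∀ x : D, x ≠ 0 → Commute z (x * z * x⁻¹)) : z ∈ Set.center D := by
  refine Semigroup.mem_center_iff.mpr fun x => (?_ : Commute z x).eq.symm
  obtain rfl | hx := eq_or_ne x 0
  · exact Commute.zero_right z
  obtain hx1 | hx1 := eq_or_ne (1 + x) 0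
  · rw [eq_neg_of_add_eq_zero_right hx1]
    exact Commute.neg_one_right z
  set a := x * z * x⁻¹
  set b := (1 + x) * z * (1 + x)⁻¹
  have ha : a * x = x * z := by simp [a, mul_assoc, hx]
  have hb : b * (1 + x) = (1 + x) * z := by simp [b, mul_assoc, hx1]
  -- `x = (b - a)⁻¹ (z - b)` is built from elements commuting with `z`, unless `a = b`.
  have hab : (b - a) * x = z - b := by
    rw [mul_one_add, one_add_mul] at hb
    rw [sub_mul, ha, sub_eq_sub_iff_add_eq_add, add_comm, hb]
  obtain hba | hba := eq_or_ne b a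
  · rw [hba, sub_self, zero_mul, eq_comm, sub_eq_zero] at hab
    rw [hba, ← hab] at hb
    simpa using Commute.sub_right hb (Commute.one_right z)
  · have hx : x = (b - a)⁻¹ * (z - b) := by rw [← hab, inv_mul_cancel_left₀ (sub_ne_zero.mpr hba)]
    have hzb : Commute z b := hz _ hx1
    rw [hx]
    exact ((hzb.sub_right (hz x ‹_›)).inv_right₀).mul_right ((Commute.refl z).sub_right hzb)

theorem coe_mem_center_of_mem_center_commutator {D : Type*} [DivisionRing D]
    {z : commutator Dˣ} (hz : z ∈ Subgroup.center (commutator Dˣ)) :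
    ((z : Dˣ) : D) ∈ Set.center D := by
  refine mem_center_of_forall_commute_conj fun x hx => ?_
  have hcomm : ∀ c ∈ commutator Dˣ, Commute (z : Dˣ) c := fun c hc =>
    (congrArg Subtype.val (Subgroup.mem_center_iff.mp hz ⟨c, hc⟩)).symm
  simpa using (commute_conj_of_forall_mem_commutator hcomm (Units.mk0 x hx)).map (Units.coeHom D)

theorem Algebra.norm_eq_one_of_mem_commutator {R S : Type*} [CommRing R] [Ring S] [Algebra R S]
    {g : Sˣ} (hg : g ∈ commutator Sˣ) : Algebra.norm R (g : S) = 1 :=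
  congrArg Units.val (Abelianization.commutator_subset_ker (Units.map (Algebra.norm R)) hg)

theorem isOfFinOrder_of_mem_commutator_of_mem_center {k A : Type*} [Field k] [Ring A] [IsDomain A]
    [Algebra k A] [FiniteDimensional k A] {g : Aˣ} (hg : g ∈ commutator Aˣ)
    (hgc : (g : A) ∈ Set.center A) : IsOfFinOrder g := by
  let Z := Subalgebra.center k A
  let : Field Z := fieldOfFiniteDimensional k Z
  let : Algebra Z A := RingHom.toAlgebra' Z.val fun c x => (Subalgebra.mem_center_iff.mp c.2 x).symm
  have : IsScalarTower k Z A := IsScalarTower.of_algebraMap_eq fun _ => rfl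
  have : Module.Finite Z A := Module.Finite.of_restrictScalars_finite k Z A
  let c : Z := ⟨g, Subalgebra.mem_center_iff.mpr fun x => Semigroup.mem_center_iff.mp hgc x⟩
  have hc : c ^ Module.finrank Z A = 1 := by
    calc c ^ Module.finrank Z A = Algebra.norm Z (algebraMap Z A c) :=
          (Algebra.norm_algebraMap c).symm
      _ = 1 := Algebra.norm_eq_one_of_mem_commutator hg
  refine isOfFinOrder_iff_pow_eq_one.mpr ⟨_, Module.finrank_pos (R := Z) (M := A), Units.ext ?_⟩
  simpa using congrArg Subtype.val hc

theorem isOfFinOrder_of_mem_commutator_of_mem_center_of_injective {k L R : Type*} [Field k]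
    [DivisionRing L] [Algebra k L] [FiniteDimensional k L] [Ring R] {f : R →+* L}
    (hf : Function.Injective f) {g : Rˣ} (hg : g ∈ commutator Rˣ)
    (hgc : (g : R) ∈ Set.center R) : IsOfFinOrder g := by
  let C := Subalgebra.centralizer k {f g}
  let φ : R →+* C := f.codRestrict C fun x => by
    rw [Subalgebra.mem_centralizer_iff]
    rintro _ rfl
    rw [← map_mul, ← map_mul, Semigroup.mem_center_iff.mp hgc x]
  have hφ : Function.Injective (Units.map (φ : R →* C)) :=
    Units.map_injective fun x y hxy => hf (congrArg Subtype.val hxy)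
  refine (hφ.isOfFinOrder_iff).mp (isOfFinOrder_of_mem_commutator_of_mem_center (k := k)
    (map_mem_commutator _ hg) (Semigroup.mem_center_iff.mpr fun y => Subtype.ext ?_))
  exact ((Subalgebra.mem_centralizer_iff k).mp y.2 _ rfl).symm

/-- If `D` is a locally linear division ring, then the center of the derived group
`D' = [D*, D*]` is a torsion group. -/
theorem stmt10 (D : Type u) [DivisionRing D] (h : IsLocallyLinear D) :
    Monoid.IsTorsion (Subgroup.center ↥(commutator Dˣ)) := by
  rintro ⟨⟨w, hw⟩, hwc⟩
  obtain ⟨T, hT⟩ := Units.exists_finset_forall_mem_map_commutator hw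
  obtain ⟨E, hTE, -, ⟨emb⟩⟩ := h T
  obtain ⟨g, hg, rfl⟩ := hT E hTE
  let := emb.instL
  have : Module.Finite (Subring.center emb.L) emb.L := emb.cf
  have hwD := coe_mem_center_of_mem_center_commutator hwc
  have hgE : (g : E) ∈ Set.center E := Semigroup.mem_center_iff.mpr fun x =>
    Subtype.ext (Semigroup.mem_center_iff.mp hwD x)
  have hgfin := isOfFinOrder_of_mem_commutator_of_mem_center_of_injective
    (k := Subring.center emb.L) emb.inj hg hgE
  exact Submonoid.isOfFinOrder_coe.mp <| Submonoid.isOfFinOrder_coe.mp <|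
    (Units.map (SubmonoidClass.subtype E)).isOfFinOrder hgfin
end

section
/- Let D be a division ring of positive characteristic p whose center F is algebraic over the prime field F_p, and suppose D is algebraic over F. Then D is commutative (Jacobson's theorem application). -/
/-
Jacobson's argument. Let `F` be a finite field and `D` a division ring algebraic over `F`, and
suppose `x y : D` do not commute. Then `K = F[x]` is a finite field, and right multiplication by `x`
is a `K`-linear endomorphism `R` of `D` (with `K` acting on the left) satisfying `R ^ |K| = R`.
Since `X ^ |K| - X = ∏_{β ∈ K} (X - β)` and `R ≠ x`, some `β ≠ x` is an eigenvalue of `R`: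
there is `u ≠ 0` with `u x = β u`. Hence `u` normalizes `K`, the monoid generated by `x` and `u`
lies in the finite set `K · F[u]`, and so `F[x, u]` is a finite domain, i.e. a field by Wedderburn's
little theorem. But `x` and `u` do not commute. For the theorem, take `F = 𝔽_p`: `D` is algebraic
over its center, which is algebraic over `𝔽_p`.
-/

open Polynomial

theorem FiniteField.prod_X_sub_C_eq_X_pow_card_sub_X (K : Type*) [Field K] [Fintype K] :
    ∏ a : K, (X - C a) = (X ^ Fintype.card K - X : K[X]) := by
  classical
  have hm : (X ^ Fintype.card K - X : K[X]).Monic :=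
    monic_X_pow_sub (by rw [degree_X]; exact_mod_cast Fintype.one_lt_card)
  have hcard : Multiset.card (X ^ Fintype.card K - X : K[X]).roots
      = (X ^ Fintype.card K - X : K[X]).natDegree := by
    rw [FiniteField.roots_X_pow_card_sub_X,
      FiniteField.X_pow_card_sub_X_natDegree_eq K Fintype.one_lt_card]
    rfl
  rw [← prod_multiset_X_sub_C_of_monic_of_roots_card_eq hm hcard,
    FiniteField.roots_X_pow_card_sub_X, Finset.prod_eq_multiset_prod]

theorem Module.End.exists_eigenvector_ne_of_pow_card_eq_self {K V : Type*} [Field K] [Fintype K]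
    [AddCommGroup V] [Module K V] {f : Module.End K V} (hf : f ^ Fintype.card K = f) {μ : K}
    (hμ : f ≠ algebraMap K _ μ) : ∃ β ≠ μ, ∃ v ≠ 0, f v = β • v := by
  classical
  by_contra! h
  have hinj : ∀ β ∈ Finset.univ.erase μ, Function.Injective (aeval f (X - C β)) := by
    intro β hβ
    rw [injective_iff_map_eq_zero]
    intro v hv
    by_contra hv0
    refine h β (Finset.ne_of_mem_erase hβ) v hv0 (sub_eq_zero.mp ?_)
    simpa using hv
  have hprod_inj : Function.Injective (aeval f (∏ β ∈ Finset.univ.erase μ, (X - C β))) :=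
    Finset.prod_induction _ (fun q : K[X] => Function.Injective (aeval f q))
      (fun q r hq hr => by rw [map_mul, Module.End.coe_mul]; exact hq.comp hr)
      (by rw [map_one]; exact Function.injective_id) hinj
  have hzero : aeval f ((∏ β ∈ Finset.univ.erase μ, (X - C β)) * (X - C μ)) = 0 := by
    rw [Finset.prod_erase_mul _ _ (Finset.mem_univ μ),
      FiniteField.prod_X_sub_C_eq_X_pow_card_sub_X, map_sub, map_pow, aeval_X, hf, sub_self]
  refine hμ (sub_eq_zero.mp (LinearMap.ext fun v => hprod_inj ?_))
  simpa using LinearMap.congr_fun hzero v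

theorem Algebra.finite_adjoin_singleton_of_isIntegral {F A : Type*} [CommRing F] [Finite F]
    [Ring A] [Algebra F A] {a : A} (ha : IsIntegral F a) : Finite (Algebra.adjoin F {a}) :=
  have : Module.Finite F (Algebra.adjoin F {a}) := .of_fg ha.fg_adjoin_singleton
  Module.finite_of_finite F

theorem Subalgebra.mul_comm_of_finite {F D : Type*} [CommRing F] [Ring D] [IsDomain D]
    [Algebra F D] (A : Subalgebra F D) [Finite A] {a b : D} (ha : a ∈ A) (hb : b ∈ A) :
    a * b = b * a :=
  congrArg Subtype.val ((Finite.isDomain_to_isField A).mul_comm ⟨a, ha⟩ ⟨b, hb⟩)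

theorem Algebra.exists_mul_eq_mul_of_mem_adjoin_singleton {F A : Type*} [CommSemiring F]
    [Semiring A] [Algebra F A] {x u β : A} (hβ : β ∈ adjoin F {x}) (hux : u * x = β * u)
    {c : A} (hc : c ∈ adjoin F {x}) : ∃ d ∈ adjoin F {x}, u * c = d * u := by
  induction hc using Algebra.adjoin_induction with
  | mem c hc => exact ⟨β, hβ, by rw [Set.mem_singleton_iff.mp hc, hux]⟩
  | algebraMap r =>
    exact ⟨algebraMap F A r, Subalgebra.algebraMap_mem _ r, (Algebra.commutes r u).symm⟩
  | add c c' _ _ ihc ihc' =>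
    obtain ⟨d, hd, hud⟩ := ihc
    obtain ⟨d', hd', hud'⟩ := ihc'
    exact ⟨d + d', add_mem hd hd', by rw [mul_add, hud, hud', add_mul]⟩
  | mul c c' _ _ ihc ihc' =>
    obtain ⟨d, hd, hud⟩ := ihc
    obtain ⟨d', hd', hud'⟩ := ihc'
    exact ⟨d * d', mul_mem hd hd', by rw [← mul_assoc, hud, mul_assoc, hud', mul_assoc]⟩

theorem Algebra.exists_pow_mul_eq_mul_pow_of_mem_adjoin_singleton {F A : Type*} [CommSemiring F]
    [Semiring A] [Algebra F A] {x u β : A} (hβ : β ∈ adjoin F {x}) (hux : u * x = β * u)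
    (i : ℕ) {c : A} (hc : c ∈ adjoin F {x}) : ∃ d ∈ adjoin F {x}, u ^ i * c = d * u ^ i := by
  induction i generalizing c with
  | zero => exact ⟨c, hc, by simp⟩
  | succ i ih =>
    obtain ⟨d, hd, hud⟩ := exists_mul_eq_mul_of_mem_adjoin_singleton hβ hux hc
    obtain ⟨d', hd', hud'⟩ := ih hd
    exact ⟨d', hd', by rw [pow_succ, mul_assoc, hud, ← mul_assoc, hud', mul_assoc]⟩

section DivisionRing

variable {F D : Type*} [Field F] [Finite F] [DivisionRing D] [Algebra F D]

theorem exists_mul_eq_mul_ne_of_not_commute {x y : D} (hx : IsIntegral F x)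
    (hxy : x * y ≠ y * x) :
    ∃ β ∈ Algebra.adjoin F {x}, β ≠ x ∧ ∃ u ≠ 0, u * x = β * u := by
  set K := Algebra.adjoin F {x}
  have := Algebra.finite_adjoin_singleton_of_isIntegral hx
  let : Field K := (Finite.isDomain_to_isField K).toField
  let := Fintype.ofFinite K
  let x' : K := ⟨x, Algebra.self_mem_adjoin_singleton F x⟩
  have hpow : LinearMap.mulRight K x ^ Fintype.card K = LinearMap.mulRight K x := by
    rw [LinearMap.pow_mulRight]
    exact congrArg _ (congrArg Subtype.val (FiniteField.pow_card x'))
  have hne : LinearMap.mulRight K x ≠ algebraMap K _ x' := fun h =>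
    hxy (LinearMap.congr_fun h y).symm
  obtain ⟨β, hβx, u, hu, hux⟩ := Module.End.exists_eigenvector_ne_of_pow_card_eq_self hpow hne
  exact ⟨β, β.2, fun h => hβx (Subtype.ext h), u, hu, hux⟩

theorem finite_adjoin_pair_of_mul_eq_mul {x u β : D} (hx : IsIntegral F x) (hu : IsIntegral F u)
    (hβ : β ∈ Algebra.adjoin F {x}) (hux : u * x = β * u) : Finite (Algebra.adjoin F {x, u}) := by
  set K := Algebra.adjoin F {x}
  have := Algebra.finite_adjoin_singleton_of_isIntegral hx
  have := Algebra.finite_adjoin_singleton_of_isIntegral hu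
  let M : Submonoid D :=
    { carrier := {t | ∃ c ∈ K, ∃ i : ℕ, t = c * u ^ i}
      one_mem' := ⟨1, one_mem K, 0, by simp⟩
      mul_mem' := by
        rintro _ _ ⟨c, hc, i, rfl⟩ ⟨d, hd, j, rfl⟩
        obtain ⟨d', hd', hud⟩ :=
          Algebra.exists_pow_mul_eq_mul_pow_of_mem_adjoin_singleton hβ hux i hd
        exact ⟨c * d', mul_mem hc hd', i + j, by
          rw [pow_add, mul_assoc c, ← mul_assoc (u ^ i), hud, mul_assoc, mul_assoc]⟩ }
  have hclosure : Submonoid.closure {x, u} ≤ M := by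
    rw [Submonoid.closure_le, Set.insert_subset_iff, Set.singleton_subset_iff]
    exact ⟨⟨x, Algebra.self_mem_adjoin_singleton F x, 0, by simp⟩, ⟨1, one_mem K, 1, by simp⟩⟩
  have hMfin : (M : Set D).Finite := by
    refine ((Set.toFinite (K : Set D)).image2 (· * ·)
      (Set.toFinite (Algebra.adjoin F {u} : Set D))).subset ?_
    rintro _ ⟨c, hc, i, rfl⟩
    exact ⟨c, hc, u ^ i, pow_mem (Algebra.self_mem_adjoin_singleton F u) i, rfl⟩
  have : Module.Finite F (Algebra.adjoin F {x, u}) := by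
    have : Module.Finite F (Submodule.span F (M : Set D)) := .span_of_finite F hMfin
    have hle : Subalgebra.toSubmodule (Algebra.adjoin F {x, u}) ≤ Submodule.span F M := by
      rw [Algebra.adjoin_eq_span]
      exact Submodule.span_mono hclosure
    exact Submodule.finiteDimensional_of_le hle
  exact Module.finite_of_finite F

theorem mul_comm_of_isAlgebraic [Algebra.IsAlgebraic F D] (x y : D) : x * y = y * x := by
  by_contra hxy
  have hint (a : D) : IsIntegral F a := (Algebra.IsAlgebraic.isAlgebraic a).isIntegral
  obtain ⟨β, hβ, hβx, u, hu, hux⟩ := exists_mul_eq_mul_ne_of_not_commute (hint x) hxy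
  have := finite_adjoin_pair_of_mul_eq_mul (hint x) (hint u) hβ hux
  have hxu := (Algebra.adjoin F {x, u}).mul_comm_of_finite
    (Algebra.subset_adjoin (Set.mem_insert x {u}))
    (Algebra.subset_adjoin (Set.mem_insert_of_mem x rfl))
  exact hβx (mul_right_cancel₀ hu (hux.symm.trans hxu.symm))

end DivisionRing

theorem isAlgebraic_of_aeval_int_eq_zero {R A : Type*} [CommRing R] [Ring A] [Algebra R A]
    {a : A} {f : ℤ[X]} (hf : f.map (Int.castRingHom R) ≠ 0) (ha : aeval a f = 0) :
    IsAlgebraic R a :=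
  ⟨_, hf, by rw [← algebraMap_int_eq, aeval_map_algebraMap, ha]⟩

/-- Let `D` be a division ring of characteristic `p > 0` whose center `F` is algebraic over
the prime field `F_p`, and suppose `D` is algebraic over `F`.  Then `D` is commutative. -/
theorem stmt19 (D : Type*) [DivisionRing D] (p : ℕ) (hp : p.Prime) (hchar : CharP D p)
    (hFalg : ∀ x ∈ Subring.center D, ∃ f : Polynomial ℤ,
      f.map (Int.castRingHom (ZMod p)) ≠ 0 ∧ Polynomial.aeval x f = 0)
    (hDalg : ∀ a : D, IsAlgebraic (Subring.center D) a) :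
    ∀ x y : D, x * y = y * x := by
  have : Fact p.Prime := ⟨hp⟩
  let _ : Algebra (ZMod p) D := ZMod.algebra D p
  let _ : Algebra (ZMod p) (Subring.center D) := ZMod.algebra _ p
  -- the center also carries the `ZMod p`-action of an additive subgroup; use the algebra actions
  have :
      @IsScalarTower (ZMod p) (Subring.center D) D Algebra.toSMul Algebra.toSMul Algebra.toSMul :=
    .of_algebraMap_eq' (Subsingleton.elim _ _)
  have : Algebra.IsAlgebraic (Subring.center D) D := ⟨hDalg⟩
  have : Algebra.IsAlgebraic (ZMod p) (Subring.center D) := ⟨fun z => by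
    obtain ⟨f, hf, hfz⟩ := hFalg z z.2
    exact (isAlgebraic_algHom_iff (IsScalarTower.toAlgHom (ZMod p) (Subring.center D) D)
      Subtype.val_injective).mp (isAlgebraic_of_aeval_int_eq_zero hf hfz)⟩
  have : Algebra.IsAlgebraic (ZMod p) D := .trans (ZMod p) (Subring.center D) D
  exact mul_comm_of_isAlgebraic (F := ZMod p)
end
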